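/- arXiv:2506.01791 — 5 statements merged into one kernel-verified Lean document; each statement's English description precedes it below -/
import Mathlib

section
/- Let f : ℝ^d → ℝ be differentiable with μ < L, such that L·‖·‖²/2 − f and f − μ·‖·‖²/2 are convex. Then for all x, y ∈ ℝ^d, f(x) − f(y) − ⟨∇f(y), x − y⟩ ≥ (μ/2)‖x − y‖² + (1/(2(L−μ)))‖∇f(x) − ∇f(y) − μ(x − y)‖². -/
open Set
open scoped RealInnerProductSpace

/-!
Put `g = f - μ ‖·‖² / 2` and `M = L - μ`. Then `g` is convex and `M ‖·‖² / 2 - g` is convex, so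
for every `z` the tangent plane of `g` at `y` lies below `g z`, which lies below the quadratic
upper model `g x + ⟪∇g x, z - x⟫ + M ‖z - x‖² / 2`. Comparing the two and choosing the minimiser
`z = x - (∇g x - ∇g y) / M` of the right-hand side gives
`g x - g y - ⟪∇g y, x - y⟫ ≥ ‖∇g x - ∇g y‖² / (2M)`, which is the claim rewritten in terms of `f`.
-/

theorem ConvexOn.add_fderiv_sub_le {E : Type*} [NormedAddCommGroup E] [NormedSpace ℝ E]
    {φ : E → ℝ} {φ' : E →L[ℝ] ℝ} {x : E}
    (hc : ConvexOn ℝ univ φ) (hφ : HasFDerivAt φ φ' x) (y : E) :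
    φ x + φ' (y - x) ≤ φ y := by
  have hline : HasDerivAt (fun t : ℝ => φ (x + t • (y - x))) (φ' (y - x)) 0 := by
    have hpath : HasDerivAt (fun t : ℝ => x + t • (y - x)) (y - x) 0 := by
      simpa using ((hasDerivAt_id (0 : ℝ)).smul_const (y - x)).const_add x
    exact hφ.comp_hasDerivAt_of_eq 0 hpath (by simp)
  have hconv : ConvexOn ℝ univ (fun t : ℝ => φ (x + t • (y - x))) := by
    simpa [Function.comp_def, AffineMap.lineMap_apply, add_comm] using
      hc.comp_affineMap (AffineMap.lineMap x y : ℝ →ᵃ[ℝ] E)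
  have hslope := hconv.le_slope_of_hasDerivAt (mem_univ 0) (mem_univ 1) one_pos hline
  simp only [slope_def_field, one_smul, zero_smul, add_zero, sub_zero, div_one,
    add_sub_cancel] at hslope
  linarith

section InnerProductSpace

variable {E : Type*} [NormedAddCommGroup E] [InnerProductSpace ℝ E] [CompleteSpace E]

theorem ConvexOn.add_inner_sub_le {φ : E → ℝ} {g : E} {x : E}
    (hc : ConvexOn ℝ univ φ) (hφ : HasGradientAt φ g x) (y : E) :
    φ x + ⟪g, y - x⟫ ≤ φ y :=
  hc.add_fderiv_sub_le (hasGradientAt_iff_hasFDerivAt.mp hφ) y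

theorem hasGradientAt_norm_sq (x : E) : HasGradientAt (fun y => ‖y‖ ^ 2) ((2 : ℝ) • x) x := by
  rw [hasGradientAt_iff_hasFDerivAt]
  refine (hasStrictFDerivAt_norm_sq x).hasFDerivAt.congr_fderiv ?_
  ext v
  simp [two_smul]

theorem HasGradientAt.const_mul_add_const_mul_norm_sq {f : E → ℝ} {f' x : E}
    (hf : HasGradientAt f f' x) (a b : ℝ) :
    HasGradientAt (fun y => a * f y + b / 2 * ‖y‖ ^ 2) (a • f' + b • x) x := by
  rw [hasGradientAt_iff_hasFDerivAt] at hf ⊢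
  refine ((hf.const_mul a).add ((hasGradientAt_iff_hasFDerivAt.mp
    (hasGradientAt_norm_sq x)).const_mul (b / 2))).congr_fderiv ?_
  ext v
  simp only [map_add, map_smul, add_apply, smul_apply,
    InnerProductSpace.toDual_apply_apply, smul_eq_mul]
  ring

theorem ConvexOn.le_add_inner_add_sq_norm_sub {g : E → ℝ} {g' x : E} {M : ℝ}
    (hc : ConvexOn ℝ univ (fun y => M / 2 * ‖y‖ ^ 2 - g y)) (hg : HasGradientAt g g' x) (z : E) :
    g z ≤ g x + ⟪g', z - x⟫ + M / 2 * ‖z - x‖ ^ 2 := by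
  have hgrad := hg.const_mul_add_const_mul_norm_sq (-1) M
  simp only [neg_one_mul, neg_one_smul, neg_add_eq_sub] at hgrad
  have htangent := hc.add_inner_sub_le hgrad z
  rw [inner_sub_left, real_inner_smul_left, inner_sub_right x z x, real_inner_self_eq_norm_sq]
    at htangent
  rw [norm_sub_sq_real, real_inner_comm x z]
  linarith

theorem ConvexOn.one_div_two_mul_norm_sub_sq_le {g : E → ℝ} {gx gy x y : E} {M : ℝ} (hM : 0 < M)
    (hg : ConvexOn ℝ univ g) (hMg : ConvexOn ℝ univ (fun y => M / 2 * ‖y‖ ^ 2 - g y))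
    (hx : HasGradientAt g gx x) (hy : HasGradientAt g gy y) :
    1 / (2 * M) * ‖gx - gy‖ ^ 2 ≤ g x - g y - ⟪gy, x - y⟫ := by
  set z := x - M⁻¹ • (gx - gy)
  have lower := hg.add_inner_sub_le hy z
  have upper := hMg.le_add_inner_add_sq_norm_sub hx z
  have hzx : z - x = -(M⁻¹ • (gx - gy)) := by simp [z]
  have hzy : ⟪gy, z - y⟫ = ⟪gy, x - y⟫ + ⟪gy, z - x⟫ := by
    rw [← inner_add_right, sub_add_sub_cancel']
  have hmin : ⟪gy - gx, z - x⟫ - M / 2 * ‖z - x‖ ^ 2 = 1 / (2 * M) * ‖gx - gy‖ ^ 2 := by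
    rw [hzx, inner_neg_right, inner_smul_right, norm_neg, norm_smul, Real.norm_eq_abs,
      abs_inv, abs_of_pos hM, ← neg_sub gx gy, inner_neg_left, real_inner_self_eq_norm_sq]
    field_simp
    ring
  rw [inner_sub_left] at hmin
  linarith

end InnerProductSpace

theorem stmt_0 {d : ℕ} (f : EuclideanSpace ℝ (Fin d) → ℝ) (μ L : ℝ)
    (hf : Differentiable ℝ f) (hμL : μ < L)
    (hL : ConvexOn ℝ univ (fun x => L / 2 * ‖x‖ ^ 2 - f x))
    (hμ : ConvexOn ℝ univ (fun x => f x - μ / 2 * ‖x‖ ^ 2)) :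
    ∀ x y : EuclideanSpace ℝ (Fin d),
      f x - f y - ⟪gradient f y, x - y⟫ ≥
        μ / 2 * ‖x - y‖ ^ 2 +
        1 / (2 * (L - μ)) * ‖gradient f x - gradient f y - μ • (x - y)‖ ^ 2 := by
  intro x y
  have hgrad : ∀ p, HasGradientAt (fun z => f z - μ / 2 * ‖z‖ ^ 2) (gradient f p - μ • p) p :=
    fun p => by
      simpa [sub_eq_add_neg, neg_div] using
        (hf p).hasGradientAt.const_mul_add_const_mul_norm_sq 1 (-μ)
  have hsmooth : ConvexOn ℝ univ
      (fun z => (L - μ) / 2 * ‖z‖ ^ 2 - (f z - μ / 2 * ‖z‖ ^ 2)) := by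
    convert hL using 2
    ring
  have key := hμ.one_div_two_mul_norm_sub_sq_le (sub_pos.2 hμL) hsmooth (hgrad x) (hgrad y)
  have hgap : gradient f x - μ • x - (gradient f y - μ • y) =
      gradient f x - gradient f y - μ • (x - y) := by
    rw [smul_sub]; abel
  rw [hgap, inner_sub_left, real_inner_smul_left, inner_sub_right y x y,
    real_inner_self_eq_norm_sq] at key
  rw [norm_sub_sq_real, real_inner_comm y x]
  linarith
end

section
/- Let f₁, f₂ : ℝ^d → ℝ be differentiable with curvatures in [μ₁, L₁] and [μ₂, L₂] respectively (μ₁ < L₁, μ₂ < L₂). Suppose xₖ, xₖ₊₁ satisfy the DCA condition ∇f₁(xₖ₊₁) = ∇f₂(xₖ). Write Δx = xₖ − xₖ₊₁, Gᵏ = ∇f₁(xₖ) − ∇f₂(xₖ), Gᵏ⁺¹ = ∇f₁(xₖ₊₁) − ∇f₂(xₖ₊₁), F = f₁ − f₂. Then F(xₖ) − F(xₖ₊₁) ≥ ((μ₁+μ₂)/2)‖Δx‖² + ‖Gᵏ⁺¹ − μ₂Δx‖²/(2(L₂−μ₂)) + ‖Gᵏ − μ₁Δx‖²/(2(L₁−μ₁)).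 -/
/-!
If `f` has curvature in `[μ, L]`, then `g = f - μ/2 ‖·‖²` is convex and
`(L - μ)`-smooth, so the co-coercivity bound for `g` yields the interpolation inequality
`f x - f y - ⟪∇f y, x - y⟫ ≥ ‖∇f x - ∇f y - μ (x - y)‖² / (2 (L - μ)) + μ/2 ‖x - y‖²`.
Adding it for `f₁` at `(xₖ, xₖ₊₁)` and for `f₂` at `(xₖ₊₁, xₖ)`, the DCA condition
`∇f₁ xₖ₊₁ = ∇f₂ xₖ` makes the two linear terms cancel.
-/

open Set
open scoped RealInnerProductSpace

theorem ConvexOn.add_fderiv_sub_le_s1 {E : Type*} [NormedAddCommGroup E] [NormedSpace ℝ E]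
    {s : Set E} {g : E → ℝ} {g' : E →L[ℝ] ℝ} {x z : E} (hg : ConvexOn ℝ s g)
    (hx : x ∈ s) (hz : z ∈ s) (hg' : HasFDerivAt g g' x) :
    g x + g' (z - x) ≤ g z := by
  let A : ℝ →ᵃ[ℝ] E := AffineMap.lineMap x z
  have hslope := (hg.comp_affineMap A).le_slope_of_hasDerivAt
    (by simpa [A] using hx) (by simpa [A] using hz) one_pos
    (hg'.comp_hasDerivAt_of_eq (0 : ℝ) AffineMap.hasDerivAt_lineMap (by simp [A]))
  simp only [slope_def_field, Function.comp_apply, A, AffineMap.lineMap_apply_zero,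
    AffineMap.lineMap_apply_one] at hslope
  linarith

variable {E : Type*} [NormedAddCommGroup E] [InnerProductSpace ℝ E]

theorem norm_sub_sq_div_le_bregman {g : E → ℝ} {G : E → E} {L : ℝ} (hL : 0 < L)
    (hconv : ∀ w z, g w + ⟪G w, z - w⟫ ≤ g z)
    (hsmooth : ∀ w z, g z ≤ g w + ⟪G w, z - w⟫ + L / 2 * ‖z - w‖ ^ 2) (x y : E) :
    ‖G x - G y‖ ^ 2 / (2 * L) ≤ g x - g y - ⟪G y, x - y⟫ := by
  -- `g - ⟪G y, ·⟫` is minimal at `y`; `z` is its gradient step from `x`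
  set u := G x - G y
  set z := x - L⁻¹ • u
  have hlow := hconv y z
  have hup := hsmooth x z
  have hzy : z - y = (x - y) - L⁻¹ • u := by simp only [z]; abel
  have hzx : z - x = -(L⁻¹ • u) := by simp only [z]; abel
  rw [hzy, inner_sub_right, real_inner_smul_right] at hlow
  rw [hzx, inner_neg_right, real_inner_smul_right, norm_neg, norm_smul, Real.norm_eq_abs,
    mul_pow, sq_abs] at hup
  have hu : ⟪G x, u⟫ = ⟪G y, u⟫ + ‖u‖ ^ 2 := by
    rw [← real_inner_self_eq_norm_sq, ← inner_add_left, add_sub_cancel]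
  have hstep : L / 2 * (L⁻¹ ^ 2 * ‖u‖ ^ 2) = L⁻¹ * ‖u‖ ^ 2 - ‖u‖ ^ 2 / (2 * L) := by
    field_simp; ring
  rw [hu] at hup
  linarith

variable [CompleteSpace E]

theorem ConvexOn.add_inner_gradient_sub_le {g : E → ℝ} {G x z : E}
    (hg : ConvexOn ℝ univ g) (hG : HasGradientAt g G x) :
    g x + ⟪G, z - x⟫ ≤ g z := by
  simpa using hg.add_fderiv_sub_le_s1 (mem_univ x) (mem_univ z) hG.hasFDerivAt

theorem hasGradientAt_half_mul_norm_sq (c : ℝ) (x : E) :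
    HasGradientAt (fun y : E => c / 2 * ‖y‖ ^ 2) (c • x) x := by
  rw [hasGradientAt_iff_hasFDerivAt]
  refine ((hasStrictFDerivAt_norm_sq x).hasFDerivAt.const_mul (c / 2)).congr_fderiv ?_
  ext v
  simp
  ring

theorem HasGradientAt.sub {f g : E → ℝ} {f' g' x : E} (hf : HasGradientAt f f' x)
    (hg : HasGradientAt g g' x) : HasGradientAt (fun y => f y - g y) (f' - g') x := by
  rw [hasGradientAt_iff_hasFDerivAt, map_sub]
  exact hf.hasFDerivAt.sub hg.hasFDerivAt

theorem interpolation_of_curvature {f : E → ℝ} (hf : Differentiable ℝ f) {μ L : ℝ} (h : μ < L)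
    (hL : ConvexOn ℝ univ (fun x => L / 2 * ‖x‖ ^ 2 - f x))
    (hμ : ConvexOn ℝ univ (fun x => f x - μ / 2 * ‖x‖ ^ 2)) (x y : E) :
    ‖gradient f x - gradient f y - μ • (x - y)‖ ^ 2 / (2 * (L - μ)) + μ / 2 * ‖x - y‖ ^ 2 ≤
      f x - f y - ⟪gradient f y, x - y⟫ := by
  have hexpand (c : ℝ) (w z : E) :
      c / 2 * ‖z‖ ^ 2 = c / 2 * ‖w‖ ^ 2 + c * ⟪w, z - w⟫ + c / 2 * ‖z - w‖ ^ 2 := by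
    rw [show z = w + (z - w) by abel, norm_add_sq_real, add_sub_cancel_left]
    ring
  set g : E → ℝ := fun w => f w - μ / 2 * ‖w‖ ^ 2
  set G : E → E := fun w => gradient f w - μ • w
  have hconv : ∀ w z, g w + ⟪G w, z - w⟫ ≤ g z := fun w z =>
    hμ.add_inner_gradient_sub_le <| (hf w).hasGradientAt.sub (hasGradientAt_half_mul_norm_sq μ w)
  have hsmooth : ∀ w z, g z ≤ g w + ⟪G w, z - w⟫ + (L - μ) / 2 * ‖z - w‖ ^ 2 := fun w z => by
    have := hL.add_inner_gradient_sub_le (z := z) <|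
      (hasGradientAt_half_mul_norm_sq L w).sub (hf w).hasGradientAt
    simp only [g, G, inner_sub_left, real_inner_smul_left] at this ⊢
    linarith [hexpand L w z, hexpand μ w z]
  have hG : G x - G y = gradient f x - gradient f y - μ • (x - y) := by
    simp only [G, smul_sub]; abel
  have := norm_sub_sq_div_le_bregman (sub_pos.2 h) hconv hsmooth x y
  rw [hG] at this
  simp only [g, G, inner_sub_left, real_inner_smul_left] at this
  linarith [hexpand μ y x]

theorem stmt_1 {d : ℕ} (f₁ f₂ : EuclideanSpace ℝ (Fin d) → ℝ) (μ₁ L₁ μ₂ L₂ : ℝ)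
    (hf₁ : Differentiable ℝ f₁) (hf₂ : Differentiable ℝ f₂)
    (h₁ : μ₁ < L₁) (h₂ : μ₂ < L₂)
    (hL₁ : ConvexOn ℝ univ (fun x => L₁ / 2 * ‖x‖ ^ 2 - f₁ x))
    (hμ₁ : ConvexOn ℝ univ (fun x => f₁ x - μ₁ / 2 * ‖x‖ ^ 2))
    (hL₂ : ConvexOn ℝ univ (fun x => L₂ / 2 * ‖x‖ ^ 2 - f₂ x))
    (hμ₂ : ConvexOn ℝ univ (fun x => f₂ x - μ₂ / 2 * ‖x‖ ^ 2))
    (xk xk1 : EuclideanSpace ℝ (Fin d))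
    (hDCA : gradient f₁ xk1 = gradient f₂ xk) :
    (f₁ xk - f₂ xk) - (f₁ xk1 - f₂ xk1) ≥
      (μ₁ + μ₂) / 2 * ‖xk - xk1‖ ^ 2 +
      ‖(gradient f₁ xk1 - gradient f₂ xk1) - μ₂ • (xk - xk1)‖ ^ 2 / (2 * (L₂ - μ₂)) +
      ‖(gradient f₁ xk - gradient f₂ xk) - μ₁ • (xk - xk1)‖ ^ 2 / (2 * (L₁ - μ₁)) := by
  have hinterp₁ := interpolation_of_curvature hf₁ h₁ hL₁ hμ₁ xk xk1
  have hinterp₂ := interpolation_of_curvature hf₂ h₂ hL₂ hμ₂ xk1 xk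
  have hG₂ : gradient f₂ xk1 - gradient f₂ xk - μ₂ • (xk1 - xk) =
      -((gradient f₁ xk1 - gradient f₂ xk1) - μ₂ • (xk - xk1)) := by
    rw [hDCA]; module
  have hinner : ⟪gradient f₂ xk, xk1 - xk⟫ = -⟪gradient f₂ xk, xk - xk1⟫ := by
    rw [← inner_neg_right, neg_sub]
  rw [hDCA] at hinterp₁
  rw [hG₂, norm_neg, hinner, norm_sub_rev xk1] at hinterp₂
  linarith
end

section
/- Let f₁, f₂ : ℝ^d → ℝ be differentiable with curvatures in [μ₁, L₁] and [μ₂, L₂] (μ₁ < L₁, μ₂ < L₂, μ₁ + μ₂ ≥ 0), and let xₖ, xₖ₊₁ satisfy ∇f₁(xₖ₊₁) = ∇f₂(xₖ). Then F(xₖ) − F(xₖ₊₁) ≥ ((μ₁+μ₂)/2)‖xₖ − xₖ₊₁‖², where F = f₁ − f₂. In particular, F decreases at each DCA iteration when μ₁ + μ₂ ≥ 0, and strictly so when μ₁ + μ₂ > 0 unless xₖ₊₁ = xₖ. -/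
/-!
Subtracting the quadratic lower curvature bounds makes `f₁ - μ₁‖·‖²/2` and `f₂ - μ₂‖·‖²/2`
convex, so each `fᵢ` lies above its tangent plus `μᵢ/2 ‖·‖²`. Write the bound for `f₁` at `xₖ₊₁`
and for `f₂` at `xₖ`: the DCA condition `∇f₁(xₖ₊₁) = ∇f₂(xₖ)` makes the two linear terms cancel
when the inequalities are added, leaving `F(xₖ) - F(xₖ₊₁) ≥ (μ₁ + μ₂)/2 ‖xₖ - xₖ₊₁‖²`.
-/

open Set
open scoped RealInnerProductSpace

theorem ConvexOn.apply_add_le_of_hasFDerivAt {E : Type*} [NormedAddCommGroup E]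
    [NormedSpace ℝ E] {φ : E → ℝ} {φ' : E →L[ℝ] ℝ} {y : E}
    (hφ : ConvexOn ℝ univ φ) (hφ' : HasFDerivAt φ φ' y) (x : E) :
    φ y + φ' (x - y) ≤ φ x := by
  have hconv : ConvexOn ℝ univ (φ ∘ AffineMap.lineMap (k := ℝ) y x) := by
    simpa using hφ.comp_affineMap (AffineMap.lineMap y x)
  have hderiv : HasDerivAt (φ ∘ AffineMap.lineMap (k := ℝ) y x) (φ' (x - y)) 0 :=
    hφ'.comp_hasDerivAt_of_eq 0 AffineMap.hasDerivAt_lineMap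
      (AffineMap.lineMap_apply_zero y x).symm
  have hslope := hconv.le_slope_of_hasDerivAt (mem_univ 0) (mem_univ 1) one_pos hderiv
  simp only [slope_def_field, Function.comp_apply, AffineMap.lineMap_apply_one,
    AffineMap.lineMap_apply_zero, sub_zero, div_one] at hslope
  linarith

theorem ConvexOn.add_inner_add_sq_le_of_hasGradientAt {F : Type*} [NormedAddCommGroup F]
    [InnerProductSpace ℝ F] [CompleteSpace F] {f : F → ℝ} {f' y : F} {c : ℝ}
    (hf : ConvexOn ℝ univ (fun z => f z - c / 2 * ‖z‖ ^ 2)) (hf' : HasGradientAt f f' y)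
    (x : F) :
    f y + ⟪f', x - y⟫ + c / 2 * ‖x - y‖ ^ 2 ≤ f x := by
  have hderiv : HasFDerivAt (fun z => f z - c / 2 * ‖z‖ ^ 2)
      (InnerProductSpace.toDual ℝ F f' - (c / 2) • (2 • innerSL ℝ y)) y :=
    hf'.hasFDerivAt.sub ((hasStrictFDerivAt_norm_sq y).hasFDerivAt.const_mul (c / 2))
  have htangent := hf.apply_add_le_of_hasFDerivAt hderiv x
  have hexpand : ‖x‖ ^ 2 = ‖x - y‖ ^ 2 + 2 * ⟪x - y, y⟫ + ‖y‖ ^ 2 := by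
    simpa using norm_add_sq_real (x - y) y
  simp only [sub_apply, smul_apply,
    InnerProductSpace.toDual_apply_apply, innerSL_apply_apply, smul_eq_mul, nsmul_eq_mul,
    Nat.cast_ofNat] at htangent
  rw [real_inner_comm (x - y) y, hexpand] at htangent
  linarith

theorem dca_step_sufficient_decrease {F : Type*} [NormedAddCommGroup F] [InnerProductSpace ℝ F]
    [CompleteSpace F] {f₁ f₂ : F → ℝ} {μ₁ μ₂ : ℝ} {g x x' : F}
    (hμ₁ : ConvexOn ℝ univ (fun z => f₁ z - μ₁ / 2 * ‖z‖ ^ 2))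
    (hμ₂ : ConvexOn ℝ univ (fun z => f₂ z - μ₂ / 2 * ‖z‖ ^ 2))
    (hg₁ : HasGradientAt f₁ g x') (hg₂ : HasGradientAt f₂ g x) :
    (μ₁ + μ₂) / 2 * ‖x - x'‖ ^ 2 ≤ (f₁ x - f₂ x) - (f₁ x' - f₂ x') := by
  have h₁ := hμ₁.add_inner_add_sq_le_of_hasGradientAt hg₁ x
  have h₂ := hμ₂.add_inner_add_sq_le_of_hasGradientAt hg₂ x'
  rw [← neg_sub x x', inner_neg_right, norm_neg] at h₂
  linarith

theorem stmt_4_general {d : ℕ} (f₁ f₂ : EuclideanSpace ℝ (Fin d) → ℝ) (μ₁ μ₂ : ℝ)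
    (hf₁ : Differentiable ℝ f₁) (hf₂ : Differentiable ℝ f₂)
    (hsum : μ₁ + μ₂ ≥ 0)
    (hμ₁ : ConvexOn ℝ univ (fun x => f₁ x - μ₁ / 2 * ‖x‖ ^ 2))
    (hμ₂ : ConvexOn ℝ univ (fun x => f₂ x - μ₂ / 2 * ‖x‖ ^ 2))
    (xk xk1 : EuclideanSpace ℝ (Fin d))
    (hDCA : gradient f₁ xk1 = gradient f₂ xk) :
    ((f₁ xk - f₂ xk) - (f₁ xk1 - f₂ xk1) ≥ (μ₁ + μ₂) / 2 * ‖xk - xk1‖ ^ 2) ∧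
    ((f₁ xk - f₂ xk) ≥ (f₁ xk1 - f₂ xk1)) ∧
    (μ₁ + μ₂ > 0 → xk1 ≠ xk → (f₁ xk - f₂ xk) > (f₁ xk1 - f₂ xk1)) := by
  have hg₂ : HasGradientAt f₂ (gradient f₁ xk1) xk := hDCA ▸ (hf₂ xk).hasGradientAt
  have hdecrease := dca_step_sufficient_decrease hμ₁ hμ₂ (hf₁ xk1).hasGradientAt hg₂
  refine ⟨hdecrease, ?_, fun hpos hne => ?_⟩
  · nlinarith [sq_nonneg ‖xk - xk1‖]
  · have hdist : 0 < ‖xk - xk1‖ ^ 2 := pow_pos (norm_pos_iff.mpr (sub_ne_zero.mpr hne.symm)) 2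
    nlinarith

theorem stmt_4 {d : ℕ} (f₁ f₂ : EuclideanSpace ℝ (Fin d) → ℝ) (μ₁ L₁ μ₂ L₂ : ℝ)
    (hf₁ : Differentiable ℝ f₁) (hf₂ : Differentiable ℝ f₂)
    (h₁ : μ₁ < L₁) (h₂ : μ₂ < L₂) (hsum : μ₁ + μ₂ ≥ 0)
    (hL₁ : ConvexOn ℝ univ (fun x => L₁ / 2 * ‖x‖ ^ 2 - f₁ x))
    (hμ₁ : ConvexOn ℝ univ (fun x => f₁ x - μ₁ / 2 * ‖x‖ ^ 2))
    (hL₂ : ConvexOn ℝ univ (fun x => L₂ / 2 * ‖x‖ ^ 2 - f₂ x))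
    (hμ₂ : ConvexOn ℝ univ (fun x => f₂ x - μ₂ / 2 * ‖x‖ ^ 2))
    (xk xk1 : EuclideanSpace ℝ (Fin d))
    (hDCA : gradient f₁ xk1 = gradient f₂ xk) :
    ((f₁ xk - f₂ xk) - (f₁ xk1 - f₂ xk1) ≥ (μ₁ + μ₂) / 2 * ‖xk - xk1‖ ^ 2) ∧
    ((f₁ xk - f₂ xk) ≥ (f₁ xk1 - f₂ xk1)) ∧
    (μ₁ + μ₂ > 0 → xk1 ≠ xk → (f₁ xk - f₂ xk) > (f₁ xk1 - f₂ xk1)) :=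
  stmt_4_general f₁ f₂ μ₁ μ₂ hf₁ hf₂ hsum hμ₁ hμ₂ xk xk1 hDCA
end

section
/- Let f₁, f₂ : ℝ^d → ℝ be differentiable with curvatures in [μ₁, L₁] and [μ₂, L₂] respectively, where L₂ > μ₁ ≥ μ₂ ≥ 0 and μ₁ < L₁. Let x₀, x₁, x₂ satisfy the DCA conditions ∇f₁(x₁) = ∇f₂(x₀) and ∇f₁(x₂) = ∇f₂(x₁). Then F(x₀) − F(x₁) ≥ (μ₁ + μ₂(L₂−μ₁)/(L₂−μ₂))·(1/2)‖x₀ − x₁‖² + μ₁(μ₁−μ₂)/(L₂−μ₂)·(1/2)‖x₁ − x₂‖², where F = f₁ − f₂. -/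
/-!
Strong convexity of `f₁` at `x₁`, with `∇f₁ x₁ = ∇f₂ x₀`, bounds `f₁ x₀ - f₁ x₁` from below, and
the interpolation inequality for the `μ₂`-strongly convex, `L₂`-smooth `f₂` bounds `f₂ x₁ - f₂ x₀`
from below with the extra term `‖∇f₂ x₁ - ∇f₂ x₀ - μ₂ (x₁ - x₀)‖² / (2 (L₂ - μ₂))`. Since
`∇f₂ x₁ - ∇f₂ x₀ = ∇f₁ x₂ - ∇f₁ x₁` has norm at least `μ₁ ‖x₂ - x₁‖` (strong monotonicity of `∇f₁`),
the identity `a (‖u - b v‖² + b (a - b) ‖v‖²) = b ‖u - a v‖² + (a - b) ‖u‖²` turns this extra term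
into the `‖x₁ - x₂‖²` term of the bound.
-/

open Set
open scoped RealInnerProductSpace Gradient

section InnerProductSpace

variable {E : Type*} [NormedAddCommGroup E] [InnerProductSpace ℝ E]

theorem mul_sub_mul_norm_sq_le {u v w : E} {a b : ℝ} (hb : 0 ≤ b) (hba : b ≤ a)
    (hw : a * ‖w‖ ≤ ‖u‖) :
    a * (a - b) * ‖w‖ ^ 2 ≤ ‖u - b • v‖ ^ 2 + b * (a - b) * ‖v‖ ^ 2 := by
  rcases (hb.trans hba).eq_or_lt with rfl | ha
  · obtain rfl : b = 0 := le_antisymm hba hb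
    simp only [zero_mul, zero_smul, sub_zero]
    positivity
  have hexpand : ∀ c : ℝ, ‖u - c • v‖ ^ 2 = ‖u‖ ^ 2 - 2 * c * ⟪u, v⟫ + c ^ 2 * ‖v‖ ^ 2 := by
    intro c
    rw [norm_sub_sq_real, real_inner_smul_right, norm_smul, mul_pow, Real.norm_eq_abs, sq_abs]
    ring
  have hidentity : a * (‖u - b • v‖ ^ 2 + b * (a - b) * ‖v‖ ^ 2)
      = b * ‖u - a • v‖ ^ 2 + (a - b) * ‖u‖ ^ 2 := by
    rw [hexpand, hexpand]
    ring
  have hsq : (a * ‖w‖) ^ 2 ≤ ‖u‖ ^ 2 := pow_le_pow_left₀ (by positivity) hw 2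
  refine le_of_mul_le_mul_left ?_ ha
  calc a * (a * (a - b) * ‖w‖ ^ 2) = (a - b) * (a * ‖w‖) ^ 2 := by ring
    _ ≤ (a - b) * ‖u‖ ^ 2 := by gcongr
    _ ≤ b * ‖u - a • v‖ ^ 2 + (a - b) * ‖u‖ ^ 2 := by
        have := mul_nonneg hb (sq_nonneg ‖u - a • v‖)
        linarith
    _ = _ := hidentity.symm

end InnerProductSpace

section Gradient

variable {E : Type*} [NormedAddCommGroup E] [InnerProductSpace ℝ E] [CompleteSpace E]
  {f : E → ℝ} {x y : E}

theorem hasGradientAt_sub_half_mul_norm_sq (hf : DifferentiableAt ℝ f y) (c : ℝ) :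
    HasGradientAt (fun z => f z - c / 2 * ‖z‖ ^ 2) (∇ f y - c • y) y := by
  rw [hasGradientAt_iff_hasFDerivAt]
  refine (hf.hasFDerivAt.sub
    ((hasStrictFDerivAt_norm_sq y).hasFDerivAt.const_mul (c / 2))).congr_fderiv ?_
  ext v
  simp
  ring

theorem gradient_fun_neg (f : E → ℝ) (y : E) : ∇ (fun z => -f z) y = -∇ f y := by
  simp [gradient, fderiv_fun_neg]

theorem tangent_sub_half_mul_norm_sq (hf : DifferentiableAt ℝ f y) (c : ℝ) (x : E) :
    (f y - c / 2 * ‖y‖ ^ 2) + ⟪∇ (fun z => f z - c / 2 * ‖z‖ ^ 2) y, x - y⟫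
      = f y + ⟪∇ f y, x - y⟫ + c / 2 * ‖x - y‖ ^ 2 - c / 2 * ‖x‖ ^ 2 := by
  have hx : ‖x‖ ^ 2 = ‖y‖ ^ 2 + 2 * ⟪y, x - y⟫ + ‖x - y‖ ^ 2 := by
    simpa using norm_add_sq_real y (x - y)
  rw [(hasGradientAt_sub_half_mul_norm_sq hf c).gradient, inner_sub_left, real_inner_smul_left, hx]
  ring

theorem ConvexOn.add_inner_gradient_le (hf : ConvexOn ℝ univ f) (hy : DifferentiableAt ℝ f y)
    (x : E) : f y + ⟪∇ f y, x - y⟫ ≤ f x := by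
  let ℓ : ℝ →ᵃ[ℝ] E := AffineMap.lineMap y x
  have hy' : DifferentiableAt ℝ f (ℓ 0) := by simpa [ℓ] using hy
  have hderiv : HasDerivAt (f ∘ ℓ) ⟪∇ f y, x - y⟫ 0 := by
    simpa [ℓ, inner_gradient_left] using
      hy'.hasFDerivAt.comp_hasDerivAt (0 : ℝ) AffineMap.hasDerivAt_lineMap
  have hslope := (hf.comp_affineMap ℓ).le_slope_of_hasDerivAt
    (mem_univ 0) (mem_univ 1) one_pos hderiv
  simp only [ℓ, slope_def_field, Function.comp_apply, AffineMap.lineMap_apply_zero,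
    AffineMap.lineMap_apply_one, sub_zero, div_one] at hslope
  linarith

theorem add_inner_gradient_add_le_of_convexOn_sub_sq {m : ℝ}
    (hf : ConvexOn ℝ univ (fun z => f z - m / 2 * ‖z‖ ^ 2)) (hy : DifferentiableAt ℝ f y)
    (x : E) : f y + ⟪∇ f y, x - y⟫ + m / 2 * ‖x - y‖ ^ 2 ≤ f x := by
  have h := hf.add_inner_gradient_le (hasGradientAt_sub_half_mul_norm_sq hy m).differentiableAt x
  rw [tangent_sub_half_mul_norm_sq hy] at h
  linarith

theorem le_add_inner_gradient_add_of_convexOn_sq_sub {L : ℝ}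
    (hf : ConvexOn ℝ univ (fun z => L / 2 * ‖z‖ ^ 2 - f z)) (hy : DifferentiableAt ℝ f y)
    (x : E) : f x ≤ f y + ⟪∇ f y, x - y⟫ + L / 2 * ‖x - y‖ ^ 2 := by
  have hneg : ConvexOn ℝ univ (fun z => -f z - -L / 2 * ‖z‖ ^ 2) := by
    convert hf using 2 with z
    ring
  have h := add_inner_gradient_add_le_of_convexOn_sub_sq hneg hy.neg x
  rw [gradient_fun_neg, inner_neg_left] at h
  linarith

theorem mul_norm_sub_le_norm_gradient_sub {m : ℝ}
    (hf : ConvexOn ℝ univ (fun z => f z - m / 2 * ‖z‖ ^ 2)) (hx : DifferentiableAt ℝ f x)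
    (hy : DifferentiableAt ℝ f y) : m * ‖x - y‖ ≤ ‖∇ f x - ∇ f y‖ := by
  have hxy := add_inner_gradient_add_le_of_convexOn_sub_sq hf hy x
  have hyx := add_inner_gradient_add_le_of_convexOn_sub_sq hf hx y
  have hmono : m * ‖x - y‖ ^ 2 ≤ ‖∇ f x - ∇ f y‖ * ‖x - y‖ := by
    refine le_trans ?_ (real_inner_le_norm _ _)
    rw [norm_sub_rev y x, ← neg_sub x y, inner_neg_right] at hyx
    rw [inner_sub_left]
    linarith
  rcases (norm_nonneg (x - y)).eq_or_lt with h | h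
  · rw [← h, mul_zero]
    exact norm_nonneg _
  · rw [sq, ← mul_assoc] at hmono
    exact le_of_mul_le_mul_right hmono h

theorem add_inner_gradient_add_norm_sq_gradient_sub_le {h : E → ℝ} {L : ℝ} (hL : 0 < L)
    (hconv : ConvexOn ℝ univ h) (hsmooth : ConvexOn ℝ univ (fun z => L / 2 * ‖z‖ ^ 2 - h z))
    (hx : DifferentiableAt ℝ h x) (hy : DifferentiableAt ℝ h y) :
    h x + ⟪∇ h x, y - x⟫ + ‖∇ h y - ∇ h x‖ ^ 2 / (2 * L) ≤ h y := by
  set w := ∇ h y - ∇ h x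
  -- compare the tangent at `x` and the upper quadratic model at `y` at the point `y - w / L`
  have hlower := hconv.add_inner_gradient_le hx (y - L⁻¹ • w)
  have hupper := le_add_inner_gradient_add_of_convexOn_sq_sub hsmooth hy (y - L⁻¹ • w)
  have hw : L⁻¹ * ⟪∇ h y, w⟫ - L⁻¹ * ⟪∇ h x, w⟫ = L⁻¹ * ‖w‖ ^ 2 := by
    rw [← mul_sub, ← inner_sub_left, real_inner_self_eq_norm_sq]
  rw [sub_sub_cancel_left, inner_neg_right, real_inner_smul_right, norm_neg, norm_smul,
    mul_pow, Real.norm_eq_abs, sq_abs] at hupper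
  rw [sub_right_comm, inner_sub_right, real_inner_smul_right] at hlower
  have hcoeff : ‖w‖ ^ 2 / (2 * L) = L⁻¹ * ‖w‖ ^ 2 - L / 2 * (L⁻¹ ^ 2 * ‖w‖ ^ 2) := by
    field_simp
    ring
  linarith

theorem add_inner_gradient_add_le_of_curvature_bounds {μ L : ℝ} (hμL : μ < L)
    (hμ : ConvexOn ℝ univ (fun z => f z - μ / 2 * ‖z‖ ^ 2))
    (hL : ConvexOn ℝ univ (fun z => L / 2 * ‖z‖ ^ 2 - f z))
    (hx : DifferentiableAt ℝ f x) (hy : DifferentiableAt ℝ f y) :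
    f x + ⟪∇ f x, y - x⟫ + μ / 2 * ‖y - x‖ ^ 2
      + ‖∇ f y - ∇ f x - μ • (y - x)‖ ^ 2 / (2 * (L - μ)) ≤ f y := by
  have hsmooth : ConvexOn ℝ univ
      (fun z => (L - μ) / 2 * ‖z‖ ^ 2 - (fun z => f z - μ / 2 * ‖z‖ ^ 2) z) := by
    convert hL using 2 with z
    ring
  have h := add_inner_gradient_add_norm_sq_gradient_sub_le (sub_pos.2 hμL) hμ hsmooth
    (hasGradientAt_sub_half_mul_norm_sq hx μ).differentiableAt
    (hasGradientAt_sub_half_mul_norm_sq hy μ).differentiableAt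
  rw [tangent_sub_half_mul_norm_sq hx, (hasGradientAt_sub_half_mul_norm_sq hx μ).gradient,
    (hasGradientAt_sub_half_mul_norm_sq hy μ).gradient, sub_sub_sub_comm, ← smul_sub] at h
  linarith

end Gradient

theorem stmt_8_general {d : ℕ} (f₁ f₂ : EuclideanSpace ℝ (Fin d) → ℝ) (μ₁ μ₂ L₂ : ℝ)
    (hf₁ : Differentiable ℝ f₁) (hf₂ : Differentiable ℝ f₂)
    (hL₂ : L₂ > μ₁) (hμ₁₂ : μ₁ ≥ μ₂) (hμ₂ : μ₂ ≥ 0)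
    (hcμ₁ : ConvexOn ℝ univ (fun x => f₁ x - μ₁ / 2 * ‖x‖ ^ 2))
    (hcL₂ : ConvexOn ℝ univ (fun x => L₂ / 2 * ‖x‖ ^ 2 - f₂ x))
    (hcμ₂ : ConvexOn ℝ univ (fun x => f₂ x - μ₂ / 2 * ‖x‖ ^ 2))
    (x₀ x₁ x₂ : EuclideanSpace ℝ (Fin d))
    (hDCA₀ : gradient f₁ x₁ = gradient f₂ x₀)
    (hDCA₁ : gradient f₁ x₂ = gradient f₂ x₁) :
    (f₁ x₀ - f₂ x₀) - (f₁ x₁ - f₂ x₁) ≥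
      (μ₁ + μ₂ * (L₂ - μ₁) / (L₂ - μ₂)) * (1 / 2) * ‖x₀ - x₁‖ ^ 2 +
      μ₁ * (μ₁ - μ₂) / (L₂ - μ₂) * (1 / 2) * ‖x₁ - x₂‖ ^ 2 := by
  have hK : 0 < L₂ - μ₂ := by linarith
  have hf₁_lower := add_inner_gradient_add_le_of_convexOn_sub_sq hcμ₁ (hf₁ x₁) x₀
  have hf₂_lower := add_inner_gradient_add_le_of_curvature_bounds (by linarith) hcμ₂ hcL₂
    (hf₂ x₀) (hf₂ x₁)
  have hgrad := mul_norm_sub_le_norm_gradient_sub hcμ₁ (hf₁ x₂) (hf₁ x₁)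
  rw [hDCA₁, hDCA₀] at hgrad
  have hsq := mul_sub_mul_norm_sq_le (v := x₁ - x₀) hμ₂ hμ₁₂ hgrad
  have hinner : ⟪∇ f₂ x₀, x₁ - x₀⟫ = -⟪∇ f₂ x₀, x₀ - x₁⟫ := by rw [← inner_neg_right, neg_sub]
  rw [hDCA₀] at hf₁_lower
  rw [hinner, norm_sub_rev x₁ x₀] at hf₂_lower
  rw [norm_sub_rev x₁ x₀, norm_sub_rev x₂ x₁] at hsq
  set N := ‖∇ f₂ x₁ - ∇ f₂ x₀ - μ₂ • (x₁ - x₀)‖ ^ 2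
  calc (μ₁ + μ₂ * (L₂ - μ₁) / (L₂ - μ₂)) * (1 / 2) * ‖x₀ - x₁‖ ^ 2
        + μ₁ * (μ₁ - μ₂) / (L₂ - μ₂) * (1 / 2) * ‖x₁ - x₂‖ ^ 2
      = μ₁ / 2 * ‖x₀ - x₁‖ ^ 2 + (μ₂ * (L₂ - μ₁) * ‖x₀ - x₁‖ ^ 2
          + μ₁ * (μ₁ - μ₂) * ‖x₁ - x₂‖ ^ 2) / (2 * (L₂ - μ₂)) := by
        field_simp
        ring
    _ ≤ μ₁ / 2 * ‖x₀ - x₁‖ ^ 2 + ((L₂ - μ₂) * μ₂ * ‖x₀ - x₁‖ ^ 2 + N) / (2 * (L₂ - μ₂)) := by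
        gcongr _ + ?_ / _
        linear_combination hsq
    _ = (μ₁ + μ₂) / 2 * ‖x₀ - x₁‖ ^ 2 + N / (2 * (L₂ - μ₂)) := by
        field_simp
        ring
    _ ≤ (f₁ x₀ - f₂ x₀) - (f₁ x₁ - f₂ x₁) := by linarith

theorem stmt_8 {d : ℕ} (f₁ f₂ : EuclideanSpace ℝ (Fin d) → ℝ) (μ₁ L₁ μ₂ L₂ : ℝ)
    (hf₁ : Differentiable ℝ f₁) (hf₂ : Differentiable ℝ f₂)
    (h₁ : μ₁ < L₁) (hL₂ : L₂ > μ₁) (hμ₁₂ : μ₁ ≥ μ₂) (hμ₂ : μ₂ ≥ 0)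
    (hcL₁ : ConvexOn ℝ univ (fun x => L₁ / 2 * ‖x‖ ^ 2 - f₁ x))
    (hcμ₁ : ConvexOn ℝ univ (fun x => f₁ x - μ₁ / 2 * ‖x‖ ^ 2))
    (hcL₂ : ConvexOn ℝ univ (fun x => L₂ / 2 * ‖x‖ ^ 2 - f₂ x))
    (hcμ₂ : ConvexOn ℝ univ (fun x => f₂ x - μ₂ / 2 * ‖x‖ ^ 2))
    (x₀ x₁ x₂ : EuclideanSpace ℝ (Fin d))
    (hDCA₀ : gradient f₁ x₁ = gradient f₂ x₀)
    (hDCA₁ : gradient f₁ x₂ = gradient f₂ x₁) :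
    (f₁ x₀ - f₂ x₀) - (f₁ x₁ - f₂ x₁) ≥
      (μ₁ + μ₂ * (L₂ - μ₁) / (L₂ - μ₂)) * (1 / 2) * ‖x₀ - x₁‖ ^ 2 +
      μ₁ * (μ₁ - μ₂) / (L₂ - μ₂) * (1 / 2) * ‖x₁ - x₂‖ ^ 2 :=
  stmt_8_general f₁ f₂ μ₁ μ₂ L₂ hf₁ hf₂ hL₂ hμ₁₂ hμ₂ hcμ₁ hcL₂ hcμ₂ x₀ x₁ x₂ hDCA₀ hDCA₁
end

section
/- Let f₁, f₂ : ℝ^d → ℝ be differentiable with curvatures in [μ₁, L₁] and [μ₂, L₂] respectively, where μ₂ ≥ μ₁ ≥ 0, 0 < L₁ ≤ μ₂ < L₂, μ₁ < L₁. Let x₀, x₁, x₂ satisfy ∇f₁(x₁) = ∇f₂(x₀) and ∇f₁(x₂) = ∇f₂(x₁). Then F(x₁) − F(x₂) ≥ (μ₂²(L₁+μ₂)/L₁²)·(1/2)‖x₀ − x₁‖², where F = f₁ − f₂. -/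
open Set InnerProductSpace
open scoped RealInnerProductSpace

/-!
Write `g = ∇f₁ x₁ - ∇f₁ x₂ = ∇f₂ x₀ - ∇f₂ x₁`. The interpolation inequality of the convex
`L₁`-smooth `f₁` at `(x₁, x₂)` plus the `μ₂`-strong convexity of `f₂` at `(x₁, x₂)`, glued by
`∇f₁ x₂ = ∇f₂ x₁`, give `F x₁ - F x₂ ≥ ‖g‖² / (2 L₁) + μ₂ / 2 ‖x₁ - x₂‖²`. Strong monotonicity
of `∇f₂` gives `‖g‖ ≥ μ₂ ‖x₀ - x₁‖`, and the `L₁`-Lipschitz gradient of `f₁` gives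
`‖x₁ - x₂‖ ≥ ‖g‖ / L₁ ≥ μ₂ ‖x₀ - x₁‖ / L₁`; substituting both yields the bound.
-/

lemma ConvexOn.add_le_of_hasFDerivAt {E : Type*} [NormedAddCommGroup E] [NormedSpace ℝ E]
    {s : Set E} {g : E → ℝ} {g' : E →L[ℝ] ℝ} {x y : E}
    (hg : ConvexOn ℝ s g) (hx : x ∈ s) (hy : y ∈ s) (hg' : HasFDerivAt g g' x) :
    g x + g' (y - x) ≤ g y := by
  rw [← AffineMap.lineMap_apply_zero (k := ℝ) x y] at hg'
  have := (hg.comp_affineMap (AffineMap.lineMap x y)).le_slope_of_hasDerivAt (x := 0) (y := 1)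
    (by simpa using hx) (by simpa using hy) one_pos
    (hg'.comp_hasDerivAt 0 AffineMap.hasDerivAt_lineMap)
  simp only [slope_def_field, Function.comp_apply, AffineMap.lineMap_apply_zero,
    AffineMap.lineMap_apply_one, sub_zero, div_one] at this
  linarith

lemma mul_norm_le_norm_of_mul_norm_sq_le_inner {E : Type*} [NormedAddCommGroup E]
    [InnerProductSpace ℝ E] {c : ℝ} {u v : E} (h : c * ‖v‖ ^ 2 ≤ ⟪u, v⟫) :
    c * ‖v‖ ≤ ‖u‖ := by
  rcases (norm_nonneg v).eq_or_lt with hv | hv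
  · rw [← hv, mul_zero]
    exact norm_nonneg u
  · nlinarith [h.trans (real_inner_le_norm u v)]

section Gradient

variable {E : Type*} [NormedAddCommGroup E] [InnerProductSpace ℝ E] [CompleteSpace E]
  {s : Set E} {f : E → ℝ} {m L : ℝ} {x y G G' : E}

lemma StrongConvexOn.add_inner_add_le_of_hasGradientAt (hf : StrongConvexOn s m f) (hx : x ∈ s)
    (hy : y ∈ s) (hG : HasGradientAt f G x) :
    f x + ⟪G, y - x⟫ + m / 2 * ‖y - x‖ ^ 2 ≤ f y := by
  have h := (strongConvexOn_iff_convex.1 hf).add_le_of_hasFDerivAt hx hy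
    (hG.hasFDerivAt.sub ((hasStrictFDerivAt_norm_sq x).hasFDerivAt.const_mul (m / 2)))
  simp only [sub_apply, smul_apply, toDual_apply_apply, innerSL_apply_apply, smul_eq_mul,
    nsmul_eq_mul, Nat.cast_ofNat, inner_sub_right, real_inner_self_eq_norm_sq] at h
  rw [norm_sub_sq_real, inner_sub_right, real_inner_comm x y]
  linarith

lemma le_add_inner_add_of_convexOn_sub (hf : ConvexOn ℝ s fun z => L / 2 * ‖z‖ ^ 2 - f z)
    (hx : x ∈ s) (hy : y ∈ s) (hG : HasGradientAt f G x) :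
    f y ≤ f x + ⟪G, y - x⟫ + L / 2 * ‖y - x‖ ^ 2 := by
  have hneg : StrongConvexOn s (-L) (-f) :=
    strongConvexOn_iff_convex.2 (by convert hf using 2; simp only [Pi.neg_apply]; ring)
  have h := hneg.add_inner_add_le_of_hasGradientAt hx hy (G := -G) (by
    rw [hasGradientAt_iff_hasFDerivAt, map_neg]; exact hG.hasFDerivAt.neg)
  simp only [Pi.neg_apply, inner_neg_left] at h
  linarith

lemma StrongConvexOn.mul_norm_sub_le_norm_sub (hf : StrongConvexOn univ m f)
    (hG : HasGradientAt f G x) (hG' : HasGradientAt f G' y) :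
    m * ‖x - y‖ ≤ ‖G - G'‖ := by
  have hxy := hf.add_inner_add_le_of_hasGradientAt (mem_univ x) (mem_univ y) hG
  have hyx := hf.add_inner_add_le_of_hasGradientAt (mem_univ y) (mem_univ x) hG'
  refine mul_norm_le_norm_of_mul_norm_sq_le_inner ?_
  rw [← neg_sub x y, inner_neg_right, norm_neg] at hxy
  rw [inner_sub_left]
  linarith

lemma ConvexOn.add_inner_add_norm_sub_sq_le (hf : ConvexOn ℝ univ f)
    (hL : ConvexOn ℝ univ fun z => L / 2 * ‖z‖ ^ 2 - f z) (hLpos : 0 < L)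
    (hG : HasGradientAt f G x) (hG' : HasGradientAt f G' y) :
    f y + ⟪G', x - y⟫ + 1 / (2 * L) * ‖G - G'‖ ^ 2 ≤ f x := by
  -- `z` minimizes the gap between the smoothness upper bound at `x` and the convexity lower
  -- bound at `y`.
  set z := x - L⁻¹ • (G - G')
  have hz := (strongConvexOn_zero.2 hf).add_inner_add_le_of_hasGradientAt (mem_univ y)
    (mem_univ z) hG'
  have hz' := le_add_inner_add_of_convexOn_sub hL (mem_univ x) (mem_univ z) hG
  have hzy : z - y = (x - y) - L⁻¹ • (G - G') := by simp only [z]; abel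
  have hzx : z - x = -(L⁻¹ • (G - G')) := by simp only [z]; abel
  rw [hzy, inner_sub_right, real_inner_smul_right, zero_div, zero_mul, add_zero] at hz
  rw [hzx, inner_neg_right, real_inner_smul_right, norm_neg, norm_smul, mul_pow,
    Real.norm_of_nonneg (inv_nonneg.2 hLpos.le)] at hz'
  have hquad : L / 2 * (L⁻¹ ^ 2 * ‖G - G'‖ ^ 2) = 1 / (2 * L) * ‖G - G'‖ ^ 2 := by
    field_simp
  have hlin : L⁻¹ * ⟪G, G - G'⟫ - L⁻¹ * ⟪G', G - G'⟫ = 2 * (1 / (2 * L) * ‖G - G'‖ ^ 2) := by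
    rw [← mul_sub, ← inner_sub_left, real_inner_self_eq_norm_sq]
    field_simp
  linarith

lemma ConvexOn.norm_sub_le_mul_norm_sub (hf : ConvexOn ℝ univ f)
    (hL : ConvexOn ℝ univ fun z => L / 2 * ‖z‖ ^ 2 - f z) (hLpos : 0 < L)
    (hG : HasGradientAt f G x) (hG' : HasGradientAt f G' y) :
    ‖G - G'‖ ≤ L * ‖x - y‖ := by
  have hxy := hf.add_inner_add_norm_sub_sq_le hL hLpos hG hG'
  have hyx := hf.add_inner_add_norm_sub_sq_le hL hLpos hG' hG
  have hcoco : L⁻¹ * ‖G - G'‖ ^ 2 ≤ ⟪x - y, G - G'⟫ := by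
    rw [norm_sub_rev G' G, ← neg_sub x y, inner_neg_right] at hyx
    rw [real_inner_comm, inner_sub_left]
    have hinv : L⁻¹ = 2 * (1 / (2 * L)) := by field_simp
    rw [hinv]
    linarith
  rw [← inv_mul_le_iff₀ hLpos]
  exact mul_norm_le_norm_of_mul_norm_sq_le_inner hcoco

end Gradient

theorem stmt_13_general {d : ℕ} (f₁ f₂ : EuclideanSpace ℝ (Fin d) → ℝ) (μ₁ L₁ μ₂ : ℝ)
    (hf₁ : Differentiable ℝ f₁) (hf₂ : Differentiable ℝ f₂)
    (hμ₂₁ : μ₂ ≥ μ₁) (hμ₁ : μ₁ ≥ 0)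
    (hL₁pos : 0 < L₁)
    (hcL₁ : ConvexOn ℝ univ (fun x => L₁ / 2 * ‖x‖ ^ 2 - f₁ x))
    (hcμ₁ : ConvexOn ℝ univ (fun x => f₁ x - μ₁ / 2 * ‖x‖ ^ 2))
    (hcμ₂ : ConvexOn ℝ univ (fun x => f₂ x - μ₂ / 2 * ‖x‖ ^ 2))
    (x₀ x₁ x₂ : EuclideanSpace ℝ (Fin d))
    (hDCA₀ : gradient f₁ x₁ = gradient f₂ x₀)
    (hDCA₁ : gradient f₁ x₂ = gradient f₂ x₁) :
    (f₁ x₁ - f₂ x₁) - (f₁ x₂ - f₂ x₂) ≥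
      μ₂ ^ 2 * (L₁ + μ₂) / L₁ ^ 2 * (1 / 2) * ‖x₀ - x₁‖ ^ 2 := by
  have hμ₂ : 0 ≤ μ₂ := hμ₁.trans hμ₂₁
  have hconv₁ : ConvexOn ℝ univ f₁ :=
    strongConvexOn_zero.1 ((strongConvexOn_iff_convex.2 hcμ₁).mono hμ₁)
  have hstrong₂ : StrongConvexOn univ μ₂ f₂ := strongConvexOn_iff_convex.2 hcμ₂
  set g := gradient f₁ x₁ - gradient f₁ x₂
  have hdescent : 1 / (2 * L₁) * ‖g‖ ^ 2 + μ₂ / 2 * ‖x₁ - x₂‖ ^ 2 ≤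
      (f₁ x₁ - f₂ x₁) - (f₁ x₂ - f₂ x₂) := by
    have h₁ := hconv₁.add_inner_add_norm_sub_sq_le hcL₁ hL₁pos (hf₁ x₁).hasGradientAt
      (hf₁ x₂).hasGradientAt
    have h₂ := hstrong₂.add_inner_add_le_of_hasGradientAt (mem_univ x₁) (mem_univ x₂)
      (hf₂ x₁).hasGradientAt
    rw [← hDCA₁, ← neg_sub x₁ x₂, inner_neg_right, norm_neg] at h₂
    linarith
  have hlower : μ₂ * ‖x₀ - x₁‖ ≤ ‖g‖ := by
    have := hstrong₂.mul_norm_sub_le_norm_sub (hf₂ x₀).hasGradientAt (hf₂ x₁).hasGradientAt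
    rwa [← hDCA₀, ← hDCA₁] at this
  have hupper : ‖g‖ ≤ L₁ * ‖x₁ - x₂‖ :=
    hconv₁.norm_sub_le_mul_norm_sub hcL₁ hL₁pos (hf₁ x₁).hasGradientAt (hf₁ x₂).hasGradientAt
  have hstep : μ₂ * ‖x₀ - x₁‖ / L₁ ≤ ‖x₁ - x₂‖ := by
    rw [div_le_iff₀' hL₁pos]
    exact hlower.trans hupper
  calc μ₂ ^ 2 * (L₁ + μ₂) / L₁ ^ 2 * (1 / 2) * ‖x₀ - x₁‖ ^ 2
      = 1 / (2 * L₁) * (μ₂ * ‖x₀ - x₁‖) ^ 2 + μ₂ / 2 * (μ₂ * ‖x₀ - x₁‖ / L₁) ^ 2 := by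
        field_simp
    _ ≤ 1 / (2 * L₁) * ‖g‖ ^ 2 + μ₂ / 2 * ‖x₁ - x₂‖ ^ 2 := by gcongr
    _ ≤ _ := hdescent

theorem stmt_13 {d : ℕ} (f₁ f₂ : EuclideanSpace ℝ (Fin d) → ℝ) (μ₁ L₁ μ₂ L₂ : ℝ)
    (hf₁ : Differentiable ℝ f₁) (hf₂ : Differentiable ℝ f₂)
    (hμ₂₁ : μ₂ ≥ μ₁) (hμ₁ : μ₁ ≥ 0)
    (hL₁pos : 0 < L₁) (hL₁μ₂ : L₁ ≤ μ₂) (hμ₂L₂ : μ₂ < L₂) (h₁ : μ₁ < L₁)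
    (hcL₁ : ConvexOn ℝ univ (fun x => L₁ / 2 * ‖x‖ ^ 2 - f₁ x))
    (hcμ₁ : ConvexOn ℝ univ (fun x => f₁ x - μ₁ / 2 * ‖x‖ ^ 2))
    (hcL₂ : ConvexOn ℝ univ (fun x => L₂ / 2 * ‖x‖ ^ 2 - f₂ x))
    (hcμ₂ : ConvexOn ℝ univ (fun x => f₂ x - μ₂ / 2 * ‖x‖ ^ 2))
    (x₀ x₁ x₂ : EuclideanSpace ℝ (Fin d))
    (hDCA₀ : gradient f₁ x₁ = gradient f₂ x₀)
    (hDCA₁ : gradient f₁ x₂ = gradient f₂ x₁) :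
    (f₁ x₁ - f₂ x₁) - (f₁ x₂ - f₂ x₂) ≥
      μ₂ ^ 2 * (L₁ + μ₂) / L₁ ^ 2 * (1 / 2) * ‖x₀ - x₁‖ ^ 2 :=
  stmt_13_general f₁ f₂ μ₁ L₁ μ₂ hf₁ hf₂ hμ₂₁ hμ₁ hL₁pos hcL₁ hcμ₁ hcμ₂ x₀ x₁ x₂ hDCA₀ hDCA₁
end
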